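/- arXiv:2410.11444 — 3 statements merged into one kernel-verified Lean document; each statement's English description precedes it below -/
import Mathlib

section
/- Let σ : ℝ → ℝ be a continuous sigmoidal function, i.e., σ(t) → 1 as t → +∞ and σ(t) → 0 as t → −∞. Let K ⊂ ℝ^n be compact and let g : K → ℝ be continuous. Then for every ε > 0 there exist a finite number m of hidden neurons, output weights a_1,…,a_m ∈ ℝ, input weight vectors w_1,…,w_m ∈ ℝ^n, biases b_1,…,b_m ∈ ℝ, and an output bias b ∈ ℝ, such that the single-hidden-layer network f(x) = Σ_{i=1}^m a_i σ(⟨w_i, x⟩ + b_i) + b satisfies |f(x) − g(x)| < ε for all x ∈ K. -/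
/-!
The exponential ridge functions `x ↦ exp ⟪w, x⟫` span a point-separating subalgebra of `C(K, ℝ)`,
dense by Stone–Weierstrass, so it suffices to approximate every ridge function
`x ↦ φ (⟪w, x⟫ + b)` by networks, i.e. a continuous `φ` on a compact interval by sums
`∑ αₖ σ (γ t + βₖ)`. Cut the interval into cells `[tₖ, tₖ₊₁]` so short that `φ` varies by less
than `δ` on each, and use the staircase `φ t₀ + ∑ₖ (φ tₖ₊₁ - φ tₖ) σ (γ (t - cₖ))` with `cₖ` the
midpoint of the `k`-th cell. For `t` in the `j`-th cell and `γ` large, the sigmoids with `k < j`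
are nearly `1` and those with `k > j` nearly `0`, so the sum telescopes to within `O(δ)` of
`φ tⱼ`; the one term with `k = j` is `O(δ)` because `σ` is bounded.
-/

open Filter Set Topology

lemma exists_tail_bounds_of_tendsto {σ : ℝ → ℝ} (hσ_top : Tendsto σ atTop (𝓝 1))
    (hσ_bot : Tendsto σ atBot (𝓝 0)) {η : ℝ} (hη : 0 < η) :
    ∃ Λ, 0 ≤ Λ ∧ (∀ s, Λ ≤ s → |σ s - 1| ≤ η) ∧ ∀ s, s ≤ -Λ → |σ s| ≤ η := by
  obtain ⟨T, hT⟩ := eventually_atTop.1 (hσ_top.eventually (Metric.closedBall_mem_nhds 1 hη))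
  obtain ⟨S, hS⟩ := eventually_atBot.1 (hσ_bot.eventually (Metric.closedBall_mem_nhds 0 hη))
  refine ⟨max (max T (-S)) 0, le_max_right _ _, fun s hs => ?_, fun s hs => ?_⟩
  · simpa [Real.dist_eq] using hT s (by grind)
  · simpa [Real.dist_eq] using hS s (by grind)

lemma exists_lt_mem_Icc_of_mem_Icc {u : ℝ} {N : ℕ} (hN : 0 < N) (hu : u ∈ Icc 0 (N : ℝ)) :
    ∃ j < N, u ∈ Icc (j : ℝ) (j + 1) := by
  rcases lt_or_ge ⌊u⌋₊ N with h | h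
  · exact ⟨⌊u⌋₊, h, Nat.floor_le hu.1, (Nat.lt_floor_add_one u).le⟩
  · refine ⟨N - 1, by omega, ?_, ?_⟩
    · have := (Nat.cast_le (α := ℝ)).2 h
      have := Nat.floor_le hu.1
      push_cast [Nat.cast_pred hN]
      linarith [hu.2]
    · push_cast [Nat.cast_pred hN]
      linarith [hu.2]

open Finset in
lemma abs_sum_mul_sub_sum_range_le {Δ φ : ℕ → ℝ} {N j : ℕ} {δ η B : ℝ} (hη : 0 ≤ η)
    (hj : j < N) (hΔ : ∀ k < N, |Δ k| ≤ δ) (hlt : ∀ k < j, |φ k - 1| ≤ η)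
    (hgt : ∀ k < N, j < k → |φ k| ≤ η) (hφj : |φ j| ≤ B) :
    |∑ k ∈ range N, Δ k * φ k - ∑ k ∈ range j, Δ k| ≤ δ * (N * η + B) := by
  have hδ : 0 ≤ δ := (abs_nonneg _).trans (hΔ j hj)
  have hstep : ∑ k ∈ range j, Δ k = ∑ k ∈ range N, Δ k * if k < j then 1 else 0 := by
    simp only [mul_ite, mul_one, mul_zero, sum_ite, sum_const_zero, add_zero]
    congr 1
    ext k; simp only [Finset.mem_range, mem_filter, iff_and_self]; omega
  have hterm : ∀ k ∈ range N, |Δ k * φ k - Δ k * if k < j then 1 else 0|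
      ≤ δ * (η + if k = j then B else 0) := by
    intro k hk
    rw [← mul_sub, abs_mul]
    refine mul_le_mul (hΔ k (mem_range.1 hk)) ?_ (abs_nonneg _) hδ
    rcases lt_trichotomy k j with h | rfl | h
    · simpa [h, h.ne] using hlt k h
    · simpa using add_le_add hη hφj
    · simpa [h.ne', not_lt.2 h.le] using hgt k (mem_range.1 hk) h
  calc |∑ k ∈ range N, Δ k * φ k - ∑ k ∈ range j, Δ k|
      ≤ ∑ k ∈ range N, |Δ k * φ k - Δ k * if k < j then 1 else 0| := by
        rw [hstep, ← sum_sub_distrib]; exact abs_sum_le_sum_abs _ _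
    _ ≤ ∑ k ∈ range N, δ * (η + if k = j then B else 0) := sum_le_sum hterm
    _ = δ * (N * η + B) := by
        rw [← mul_sum, sum_add_distrib, sum_ite_eq', if_pos (mem_range.2 hj)]
        simp

open Finset in
lemma abs_staircase_sub_lt {σ h : ℝ → ℝ} {a w δ Λ B : ℝ} {N : ℕ} (hw : 0 < w) (hN : 0 < N)
    (hΛ : 0 ≤ Λ) (hB : ∀ s, |σ s| ≤ B) (htop : ∀ s, Λ ≤ s → |σ s - 1| ≤ 1 / N)
    (hbot : ∀ s, s ≤ -Λ → |σ s| ≤ 1 / N)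
    (hh : ∀ s ∈ Icc a (a + N * w), ∀ t ∈ Icc a (a + N * w), |s - t| ≤ w → |h s - h t| < δ)
    {t : ℝ} (ht : t ∈ Icc a (a + N * w)) :
    |∑ k ∈ range N,
        (h (a + (k + 1 : ℕ) * w) - h (a + k * w)) * σ (2 * Λ * ((t - a) / w - k - 1 / 2))
      + h a - h t| < δ * (B + 2) := by
  set u := (t - a) / w
  have hu : u ∈ Icc 0 (N : ℝ) := by
    constructor
    · exact div_nonneg (by linarith [ht.1]) hw.le
    · rw [div_le_iff₀ hw]; linarith [ht.2]
  obtain ⟨j, hj, huj⟩ := exists_lt_mem_Icc_of_mem_Icc hN hu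
  have hgrid : ∀ k ≤ N, a + k * w ∈ Icc a (a + N * w) := fun k hk => by
    have : (k : ℝ) * w ≤ N * w := by gcongr
    constructor <;> nlinarith
  have hstep : ∀ k < N, |h (a + (k + 1 : ℕ) * w) - h (a + k * w)| ≤ δ := fun k hk =>
    (hh _ (hgrid _ hk) _ (hgrid _ hk.le) (by push_cast; ring_nf; rw [abs_of_pos hw])).le
  have hcont : |h (a + j * w) - h t| < δ := by
    refine hh _ (hgrid j hj.le) _ ht (abs_le.2 ⟨?_, ?_⟩)
    all_goals
      have : t - a = u * w := by simp only [u]; field_simp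
      nlinarith [huj.1, huj.2]
  have hsum := abs_sum_mul_sub_sum_range_le (φ := fun k => σ (2 * Λ * (u - k - 1 / 2)))
    (by positivity) hj hstep (fun k hk => htop _ ?_) (fun k _ hk => hbot _ ?_) (hB _)
  · rw [sum_range_sub (fun k : ℕ => h (a + k * w))] at hsum
    calc _ ≤ _ := abs_sub_le _ (h (a + j * w)) _
      _ < δ * (N * (1 / N) + B) + δ := by
          refine add_lt_add_of_le_of_lt (le_of_eq_of_le ?_ hsum) hcont
          rw [Nat.cast_zero, zero_mul, add_zero, sub_sub_eq_add_sub]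
      _ = δ * (B + 2) := by field_simp; ring
  · have : (k : ℝ) + 1 ≤ j := by exact_mod_cast hk
    nlinarith [huj.1]
  · have : (j : ℝ) + 1 ≤ k := by exact_mod_cast hk
    nlinarith [huj.2]

open Finset in
theorem exists_sum_sigmoid_approx {σ : ℝ → ℝ} (hσ : Continuous σ)
    (hσ_top : Tendsto σ atTop (𝓝 1)) (hσ_bot : Tendsto σ atBot (𝓝 0)) {h : ℝ → ℝ} {a b : ℝ}
    (hh : ContinuousOn h (Icc a b)) {δ : ℝ} (hδ : 0 < δ) :
    ∃ (N : ℕ) (α β : ℕ → ℝ) (γ c : ℝ), ∀ t ∈ Icc a b,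
      |∑ k ∈ range N, α k * σ (γ * t + β k) + c - h t| < δ := by
  rcases le_or_gt b a with hba | hab
  · refine ⟨0, 0, 0, 0, h a, fun t ht => ?_⟩
    obtain rfl : t = a := le_antisymm (ht.2.trans hba) ht.1
    simpa using hδ
  obtain ⟨B, hB⟩ : ∃ B, ∀ s, |σ s| ≤ B := by
    simpa using isBounded_iff_forall_norm_le.1 (hσ.isBounded_range_iff_isBigO_atTop_atBot.2
      ⟨hσ_top.isBigO_one ℝ, hσ_bot.isBigO_one ℝ⟩)
  have hB0 : 0 ≤ B := (abs_nonneg _).trans (hB 0)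
  obtain ⟨d, hd, hhd⟩ := Metric.uniformContinuousOn_iff.1
    (isCompact_Icc.uniformContinuousOn_of_continuous hh) (δ / (B + 2)) (by positivity)
  obtain ⟨N, hN⟩ := exists_nat_gt ((b - a) / d)
  have hN0 : 0 < N := by exact_mod_cast (div_pos (sub_pos.2 hab) hd).trans hN
  set w := (b - a) / N
  have hw : 0 < w := div_pos (sub_pos.2 hab) (by positivity)
  have hwd : w < d := by
    rw [div_lt_iff₀ (by positivity)]; rw [div_lt_iff₀ hd] at hN; linarith
  have hb : a + N * w = b := by simp only [w]; field_simp; ring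
  obtain ⟨Λ, hΛ, htop, hbot⟩ := exists_tail_bounds_of_tendsto hσ_top hσ_bot
    (η := 1 / N) (by positivity)
  refine ⟨N, fun k => h (a + (k + 1 : ℕ) * w) - h (a + k * w),
    fun k => -2 * Λ * (a / w + k + 1 / 2), 2 * Λ / w, h a, fun t ht => ?_⟩
  have harg : ∀ k : ℕ,
      2 * Λ / w * t + -2 * Λ * (a / w + k + 1 / 2) = 2 * Λ * ((t - a) / w - k - 1 / 2) := by
    intro k; field_simp; ring
  simp only [harg]
  rw [← hb] at ht hhd
  calc _ < δ / (B + 2) * (B + 2) := abs_staircase_sub_lt hw hN0 hΛ hB htop hbot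
        (fun s hs t ht hst => by simpa [Real.dist_eq] using hhd s hs t ht (hst.trans_lt hwd)) ht
    _ = δ := by field_simp

section Networks

variable {E : Type*} [NormedAddCommGroup E] [InnerProductSpace ℝ E] (K : Set E)

def ridge (φ : C(ℝ, ℝ)) (w : E) (b : ℝ) : C(K, ℝ) :=
  φ.comp ⟨fun x => inner ℝ w (x : E) + b, by fun_prop⟩

@[simp]
lemma ridge_apply (φ : C(ℝ, ℝ)) (w : E) (b : ℝ) (x : K) :
    ridge K φ w b x = φ (inner ℝ w (x : E) + b) :=
  rfl

def shallowNetworks (σ : C(ℝ, ℝ)) : Submodule ℝ C(K, ℝ) :=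
  Submodule.span ℝ (range fun p : E × ℝ => ridge K σ p.1 p.2)

noncomputable def expInner (w : E) : C(K, ℝ) := ridge K ⟨Real.exp, Real.continuous_exp⟩ w 0

variable {K}

lemma expInner_add (v w : E) : expInner K (v + w) = expInner K v * expInner K w := by
  ext x; simp [expInner, inner_add_left, Real.exp_add]

lemma expInner_zero : expInner K 0 = 1 := by
  ext x; simp [expInner]

lemma mul_mem_span_range_expInner {f g : C(K, ℝ)} (hf : f ∈ Submodule.span ℝ (range (expInner K)))
    (hg : g ∈ Submodule.span ℝ (range (expInner K))) :
    f * g ∈ Submodule.span ℝ (range (expInner K)) := by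
  have := Submodule.mul_mem_mul hf hg
  rw [Submodule.span_mul_span] at this
  refine Submodule.span_mono ?_ this
  rintro _ ⟨_, ⟨v, rfl⟩, _, ⟨w, rfl⟩, rfl⟩
  exact ⟨v + w, expInner_add v w⟩

lemma dense_span_range_expInner [CompactSpace K] :
    Dense (Submodule.span ℝ (range (expInner K)) : Set C(K, ℝ)) := by
  let A := (Submodule.span ℝ (range (expInner K))).toSubalgebra
    (Submodule.subset_span ⟨0, expInner_zero⟩) fun _ _ => mul_mem_span_range_expInner
  have hsep : A.SeparatesPoints := by
    intro x y hxy
    refine ⟨_, ⟨expInner K (x - y), Submodule.subset_span ⟨_, rfl⟩, rfl⟩, fun h => hxy ?_⟩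
    have h' : inner ℝ ((x : E) - y) (x - y) = 0 := by
      rw [inner_sub_right, sub_eq_zero]; simpa [expInner] using h
    exact Subtype.ext (sub_eq_zero.1 (inner_self_eq_zero.1 h'))
  have := ContinuousMap.subalgebra_topologicalClosure_eq_top_of_separatesPoints A hsep
  change Dense (A : Set C(K, ℝ))
  rw [dense_iff_closure_eq, ← Subalgebra.topologicalClosure_coe, this, Algebra.coe_top]

lemma const_mem_shallowNetworks {σ : C(ℝ, ℝ)} {b : ℝ} (hb : σ b ≠ 0) (c : ℝ) :
    ContinuousMap.const K c ∈ shallowNetworks K σ := by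
  have : ContinuousMap.const K c = (c / σ b) • ridge K σ 0 b := by
    ext x; simp [div_mul_cancel₀ _ hb]
  rw [this]
  exact Submodule.smul_mem _ _ (Submodule.subset_span ⟨(0, b), rfl⟩)

lemma exists_eq_sum_of_mem_shallowNetworks {σ : C(ℝ, ℝ)} {f : C(K, ℝ)}
    (hf : f ∈ shallowNetworks K σ) :
    ∃ (m : ℕ) (a : Fin m → ℝ) (w : Fin m → E) (b : Fin m → ℝ),
      ∀ x : K, f x = ∑ i, a i * σ (inner ℝ (w i) (x : E) + b i) := by
  obtain ⟨m, a, g, rfl⟩ := Submodule.mem_span_set'.1 hf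
  choose p hp using fun i => (g i).2
  refine ⟨m, a, fun i => (p i).1, fun i => (p i).2, fun x => ?_⟩
  simp [← hp]

open Finset in
lemma ridge_mem_closure_shallowNetworks [CompactSpace K] {σ : C(ℝ, ℝ)}
    (hσ_top : Tendsto σ atTop (𝓝 1)) (hσ_bot : Tendsto σ atBot (𝓝 0)) (φ : C(ℝ, ℝ)) (w : E)
    (b : ℝ) : ridge K φ w b ∈ (shallowNetworks K σ).topologicalClosure := by
  set C := ‖ridge K (.id ℝ) w b‖
  have hC : ∀ x : K, inner ℝ w (x : E) + b ∈ Icc (-C) C := fun x =>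
    abs_le.1 ((ridge K (.id ℝ) w b).norm_coe_le_norm x)
  obtain ⟨b₀, hb₀⟩ := (hσ_top.eventually_ne one_ne_zero).exists
  rw [← SetLike.mem_coe, Submodule.topologicalClosure_coe, Metric.mem_closure_iff]
  intro δ hδ
  obtain ⟨N, α, β, γ, c, happrox⟩ :=
    exists_sum_sigmoid_approx σ.continuous hσ_top hσ_bot φ.continuous.continuousOn hδ
  refine ⟨∑ k ∈ range N, α k • ridge K σ (γ • w) (γ * b + β k) + .const K c,
    add_mem (sum_mem fun k _ => Submodule.smul_mem _ _
        (Submodule.subset_span ⟨(γ • w, γ * b + β k), rfl⟩)) (const_mem_shallowNetworks hb₀ c), ?_⟩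
  rw [dist_comm, ContinuousMap.dist_lt_iff hδ]
  intro x
  rw [Real.dist_eq]
  convert happrox _ (hC x) using 4 <;> simp [inner_smul_left, mul_add, add_assoc]

lemma dense_shallowNetworks [CompactSpace K] {σ : C(ℝ, ℝ)}
    (hσ_top : Tendsto σ atTop (𝓝 1)) (hσ_bot : Tendsto σ atBot (𝓝 0)) :
    Dense (shallowNetworks K σ : Set C(K, ℝ)) := by
  have : Submodule.span ℝ (range (expInner K)) ≤ (shallowNetworks K σ).topologicalClosure :=
    Submodule.span_le.2 (range_subset_iff.2 fun w =>
      ridge_mem_closure_shallowNetworks hσ_top hσ_bot _ w 0)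
  rw [← dense_closure, ← Submodule.topologicalClosure_coe]
  exact dense_span_range_expInner.mono this

end Networks

/-- Universal approximation theorem (Cybenko): if `σ` is a continuous sigmoidal
function (`σ(t) → 1` as `t → +∞`, `σ(t) → 0` as `t → −∞`), `K ⊆ ℝⁿ` is compact and
`g : K → ℝ` is continuous, then for every `ε > 0` there is a single-hidden-layer
network `f(x) = Σ_{i=1}^m a_i σ(⟨w_i, x⟩ + b_i) + b` with `|f(x) − g(x)| < ε`
for all `x ∈ K`. -/
theorem universal_approximation
    {n : ℕ} (σ : ℝ → ℝ) (hσ_cont : Continuous σ)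
    (hσ_top : Tendsto σ atTop (nhds 1))
    (hσ_bot : Tendsto σ atBot (nhds 0))
    (K : Set (EuclideanSpace ℝ (Fin n))) (hK : IsCompact K)
    (g : EuclideanSpace ℝ (Fin n) → ℝ) (hg : ContinuousOn g K)
    (ε : ℝ) (hε : 0 < ε) :
    ∃ (m : ℕ) (a : Fin m → ℝ) (w : Fin m → EuclideanSpace ℝ (Fin n))
      (b : Fin m → ℝ) (b₀ : ℝ),
      ∀ x ∈ K,
        |(∑ i, a i * σ ((inner ℝ (w i) x : ℝ) + b i) + b₀) - g x| < ε := by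
  have : CompactSpace K := isCompact_iff_compactSpace.1 hK
  obtain ⟨f, hf, hfg⟩ := (dense_shallowNetworks (K := K) (σ := ⟨σ, hσ_cont⟩) hσ_top
    hσ_bot).exists_dist_lt ⟨_, hg.domRestrict⟩ hε
  obtain ⟨m, a, w, b, hfab⟩ := exists_eq_sum_of_mem_shallowNetworks hf
  refine ⟨m, a, w, b, 0, fun x hx => ?_⟩
  have hfgx := (ContinuousMap.dist_apply_le_dist ⟨x, hx⟩).trans_lt hfg
  rw [hfab] at hfgx
  rwa [add_zero, abs_sub_comm, ← Real.dist_eq]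
end

section
/- Let X be a measurable space. For probability measures P, Q on X, define the Jensen–Shannon distance d_JS(P,Q) = √( (1/2) KL(P ‖ M) + (1/2) KL(Q ‖ M) ), where M = (1/2)(P + Q) and KL denotes the Kullback–Leibler divergence. For each domain D, given for every label y ∈ {0,1} and sensitive attribute a ∈ {0,1} a conditional input distribution P_D^{X|Y=y,A=a} on X, define the equal odds gap of a measurable function f : X → [0,1] by EOGAP_D(f) = Σ_{y∈{0,1}} | E_{x∼P_D^{X|Y=y,A=0}}[f(x)] − E_{x∼P_D^{X|Y=y,A=1}}[f(x)] |. Then for any measurable f : X → [0,1], any source domain S and any target domain T: EOGAP_T(f) ≤ EOGAP_S(f) + √2 · Σ_{y∈{0,1}} Σ_{a∈{0,1}} d_JS( P_T^{X|Y=y,A=a}, P_S^{X|Y=y,A=a} ). -/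
open MeasureTheory
open scoped ENNReal Classical

/-- Kullback–Leibler divergence `KL(P‖Q) = E_{x∼P}[ln (dP/dQ)(x)]`, taken to be `+∞`
when `P` is not absolutely continuous with respect to `Q` (or the log-likelihood
ratio is not integrable). -/
noncomputable def klDivergence {X : Type*} [MeasurableSpace X]
    (P Q : Measure X) : ℝ≥0∞ :=
  if P ≪ Q ∧ Integrable (llr P Q) P then ENNReal.ofReal (∫ x, llr P Q x ∂P) else ⊤

/-- Jensen–Shannon distance
`d_JS(P,Q) = √((1/2) KL(P‖M) + (1/2) KL(Q‖M))` with `M = (1/2)(P+Q)`. -/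
noncomputable def jsDist {X : Type*} [MeasurableSpace X] (P Q : Measure X) : ℝ :=
  Real.sqrt ((1 / 2) * (klDivergence P ((2 : ℝ≥0∞)⁻¹ • (P + Q))).toReal
    + (1 / 2) * (klDivergence Q ((2 : ℝ≥0∞)⁻¹ • (P + Q))).toReal)

/-- Equal odds gap of a score `f` on a domain specifying, for each label
`y ∈ {0,1}` and sensitive attribute `a ∈ {0,1}`, a conditional input distribution
`P y a`: `EOGAP(f) = Σ_y |E_{P y 0}[f] − E_{P y 1}[f]|`. -/
noncomputable def eoGap {X : Type*} [MeasurableSpace X]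
    (f : X → ℝ) (P : Bool → Bool → Measure X) : ℝ :=
  ∑ y : Bool, |(∫ x, f x ∂(P y false)) - ∫ x, f x ∂(P y true)|

/-! With `M = (P + Q)/2` and densities `p = dP/dM`, `q = dQ/dM` one has `p + q = 2`, hence
`|E_P f - E_Q f| = |∫ (p - q) (f - 1/2) dM| ≤ ∫ |p - 1| dM ≤ (∫ (p - 1)² dM)^{1/2}`.
The elementary inequality `(a - 1)² ≤ a log a + b log b` for `a + b = 2` bounds the last integral
by `KL(P‖M) + KL(Q‖M) = 2 d_JS(P, Q)²`. The gap then transfers from `S` to `T` label by label,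
by the triangle inequality. -/

section Elementary

open Real

lemma two_mul_le_log_one_add_sub_log_one_sub {s : ℝ} (hs0 : 0 ≤ s) (hs1 : s < 1) :
    2 * s ≤ log (1 + s) - log (1 - s) := by
  have hsum := hasSum_log_sub_log_of_abs_lt_one (x := s) (by rwa [abs_of_nonneg hs0])
  simpa using le_hasSum hsum 0 fun k _ => by positivity

lemma sq_le_mul_log_one_add_add_mul_log_one_sub {s : ℝ} (hs : |s| ≤ 1) :
    s ^ 2 ≤ (1 + s) * log (1 + s) + (1 - s) * log (1 - s) := by
  wlog hs0 : 0 ≤ s generalizing s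
  · simpa [add_comm, sub_eq_add_neg] using this (s := -s) (by rwa [abs_neg]) (by linarith)
  let g : ℝ → ℝ := fun s => (1 + s) * log (1 + s) + (1 - s) * log (1 - s) - s ^ 2
  have hderiv : ∀ t ∈ Set.Ioo (0 : ℝ) 1,
      HasDerivAt g (log (1 + t) - log (1 - t) - 2 * t) t := by
    intro t ht
    have hplus := (hasDerivAt_mul_log (x := 1 + t) (by linarith [ht.1])).comp t
      ((hasDerivAt_id t).const_add 1)
    have hminus := (hasDerivAt_mul_log (x := 1 - t) (by linarith [ht.2])).comp t
      ((hasDerivAt_id t).const_sub 1)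
    exact ((hplus.add hminus).sub (hasDerivAt_pow 2 t)).congr_deriv (by norm_num; ring)
  have hmono : MonotoneOn g (Set.Icc 0 1) := by
    refine monotoneOn_of_deriv_nonneg (convex_Icc 0 1) ?_ ?_ ?_
    · exact (((continuous_mul_log.comp (continuous_const.add continuous_id)).add
        (continuous_mul_log.comp (continuous_const.sub continuous_id))).sub
        (continuous_pow 2)).continuousOn
    · rw [interior_Icc]
      exact fun t ht => (hderiv t ht).differentiableAt.differentiableWithinAt
    · rw [interior_Icc]
      intro t ht
      rw [(hderiv t ht).deriv]
      linarith [two_mul_le_log_one_add_sub_log_one_sub ht.1.le ht.2]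
  have := hmono ⟨le_rfl, zero_le_one⟩ ⟨hs0, (abs_le.mp hs).2⟩ hs0
  simp only [g] at this
  norm_num at this
  linarith

lemma sq_sub_one_le_mul_log_add_mul_log {a b : ℝ} (ha : 0 ≤ a) (hb : 0 ≤ b) (hab : a + b = 2) :
    (a - 1) ^ 2 ≤ a * log a + b * log b := by
  have h := sq_le_mul_log_one_add_add_mul_log_one_sub (s := a - 1)
    (abs_le.mpr ⟨by linarith, by linarith⟩)
  rwa [add_sub_cancel, show 1 - (a - 1) = b by linarith] at h

lemma abs_mul_log_le_two {t : ℝ} (ht0 : 0 ≤ t) (ht2 : t ≤ 2) : |t * log t| ≤ 2 := by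
  have hlow := self_sub_one_le_mul_log ht0
  rcases ht0.eq_or_lt with rfl | htpos
  · simp
  have hup := mul_le_mul_of_nonneg_left (log_le_sub_one_of_pos htpos) ht0
  exact abs_le.mpr ⟨by linarith, by nlinarith⟩

lemma integral_abs_le_sqrt_integral_sq {Ω : Type*} [MeasurableSpace Ω] {μ : Measure Ω}
    [IsProbabilityMeasure μ] {g : Ω → ℝ} (hg : MemLp g 2 μ) :
    ∫ x, |g x| ∂μ ≤ √(∫ x, g x ^ 2 ∂μ) := by
  have hvar := ProbabilityTheory.variance_eq_sub hg.abs
  have := ProbabilityTheory.variance_nonneg |g| μ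
  simp only [Pi.pow_apply, Pi.abs_apply, sq_abs] at hvar
  exact Real.le_sqrt_of_sq_le (by linarith)

end Elementary

section Mixture

variable {X : Type*} [MeasurableSpace X] {P Q : Measure X}

instance isProbabilityMeasure_inv_two_smul_add [IsProbabilityMeasure P]
    [IsProbabilityMeasure Q] : IsProbabilityMeasure ((2 : ℝ≥0∞)⁻¹ • (P + Q)) :=
  ⟨by simp [ENNReal.inv_two_add_inv_two]⟩

lemma absolutelyContinuous_inv_two_smul_add_left : P ≪ (2 : ℝ≥0∞)⁻¹ • (P + Q) :=
  (Measure.absolutelyContinuous_of_le (Measure.le_add_right le_rfl)).trans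
    (Measure.absolutelyContinuous_smul (by simp))

lemma absolutelyContinuous_inv_two_smul_add_right : Q ≪ (2 : ℝ≥0∞)⁻¹ • (P + Q) :=
  add_comm P Q ▸ absolutelyContinuous_inv_two_smul_add_left

lemma toReal_rnDeriv_add_toReal_rnDeriv_inv_two_smul_add [IsFiniteMeasure P]
    [IsFiniteMeasure Q] :
    ∀ᵐ x ∂((2 : ℝ≥0∞)⁻¹ • (P + Q)), (P.rnDeriv ((2 : ℝ≥0∞)⁻¹ • (P + Q)) x).toReal
      + (Q.rnDeriv ((2 : ℝ≥0∞)⁻¹ • (P + Q)) x).toReal = 2 := by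
  have hM : (2 : ℝ≥0∞)⁻¹ • (P + Q) ≪ P + Q := Measure.smul_absolutelyContinuous
  have : IsFiniteMeasure ((2 : ℝ≥0∞)⁻¹ • (P + Q)) := (P + Q).smul_finite (by simp)
  filter_upwards [Measure.rnDeriv_add' P Q ((2 : ℝ≥0∞)⁻¹ • (P + Q)),
    hM.ae_le (Measure.rnDeriv_smul_right_of_ne_top (P + Q) (P + Q) (r := (2 : ℝ≥0∞)⁻¹)
      (by simp) (by simp)),
    hM.ae_le (Measure.rnDeriv_self (P + Q))] with x hadd hsmul hself
  have hsum : P.rnDeriv ((2 : ℝ≥0∞)⁻¹ • (P + Q)) x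
      + Q.rnDeriv ((2 : ℝ≥0∞)⁻¹ • (P + Q)) x = 2 := by
    rw [← Pi.add_apply, ← hadd, hsmul]
    simp [hself]
  rw [← ENNReal.toReal_add, hsum, ENNReal.toReal_ofNat]
  · exact ne_top_of_le_ne_top (by simp) (hsum ▸ le_self_add)
  · exact ne_top_of_le_ne_top (by simp) (hsum ▸ le_add_self)

end Mixture

section Divergence

variable {X : Type*} [MeasurableSpace X]

lemma klDivergence_eq_klDiv {P M : Measure X} [IsFiniteMeasure P]
    (h : P Set.univ = M Set.univ) :
    klDivergence P M = InformationTheory.klDiv P M := by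
  rw [klDivergence, InformationTheory.klDiv_def]
  split_ifs
  · simp [measureReal_def, h]
  · rfl

lemma toReal_klDivergence_eq_integral_mul_log {P M : Measure X} [IsFiniteMeasure P]
    [IsFiniteMeasure M] (hPM : P ≪ M) (h : P Set.univ = M Set.univ) :
    (klDivergence P M).toReal
      = ∫ x, (P.rnDeriv M x).toReal * Real.log (P.rnDeriv M x).toReal ∂M := by
  rw [klDivergence_eq_klDiv h, InformationTheory.toReal_klDiv_of_measure_eq hPM h,
    integral_rnDeriv_mul_log hPM]

lemma abs_integral_sub_integral_le_integral_abs_rnDeriv_sub {P Q M : Measure X}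
    [IsProbabilityMeasure P] [IsProbabilityMeasure Q] [SigmaFinite M] (hPM : P ≪ M) (hQM : Q ≪ M)
    {f : X → ℝ} (hf : Measurable f) (hf01 : ∀ x, f x ∈ Set.Icc (0 : ℝ) 1) :
    |∫ x, f x ∂P - ∫ x, f x ∂Q|
      ≤ 1 / 2 * ∫ x, |(P.rnDeriv M x).toReal - (Q.rnDeriv M x).toReal| ∂M := by
  have hg : ∀ x, |f x - 1 / 2| ≤ 1 / 2 := fun x =>
    abs_le.mpr ⟨by linarith [(hf01 x).1], by linarith [(hf01 x).2]⟩
  have hint : ∀ μ : Measure X, [IsFiniteMeasure μ] → Integrable f μ := fun μ _ =>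
    Integrable.of_bound hf.aestronglyMeasurable 1
      (.of_forall fun x => abs_le.mpr ⟨by linarith [(hf01 x).1], (hf01 x).2⟩)
  -- recentring `f` at `1/2` costs nothing since `P` and `Q` have the same mass
  have hrecentre : ∀ μ : Measure X, [IsProbabilityMeasure μ] → μ ≪ M →
      ∫ x, (μ.rnDeriv M x).toReal * (f x - 1 / 2) ∂M = ∫ x, f x ∂μ - 1 / 2 := by
    intro μ _ hμM
    refine (integral_rnDeriv_smul hμM).trans ?_
    rw [integral_sub (hint μ) (integrable_const _)]
    simp
  have hcentre : ∫ x, f x ∂P - ∫ x, f x ∂Q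
      = ∫ x, ((P.rnDeriv M x).toReal - (Q.rnDeriv M x).toReal) * (f x - 1 / 2) ∂M := by
    simp_rw [sub_mul]
    have hint_shift : ∀ μ : Measure X, [IsFiniteMeasure μ] → μ ≪ M →
        Integrable (fun x => (μ.rnDeriv M x).toReal * (f x - 1 / 2)) M := fun μ _ hμM =>
      (integrable_toReal_rnDeriv_mul_iff hμM).mpr ((hint μ).sub (integrable_const _))
    rw [integral_sub (hint_shift P hPM) (hint_shift Q hQM), hrecentre P hPM, hrecentre Q hQM]
    ring
  have hpq : Integrable (fun x => |(P.rnDeriv M x).toReal - (Q.rnDeriv M x).toReal|) M :=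
    (Measure.integrable_toReal_rnDeriv.sub Measure.integrable_toReal_rnDeriv).abs
  rw [hcentre, ← integral_const_mul, ← Real.norm_eq_abs]
  refine norm_integral_le_of_norm_le (hpq.const_mul _) (.of_forall fun x => ?_)
  rw [Real.norm_eq_abs, abs_mul, mul_comm]
  exact mul_le_mul_of_nonneg_right (hg x) (abs_nonneg _)

end Divergence

lemma abs_integral_sub_integral_le_sqrt_two_mul_jsDist {X : Type*} [MeasurableSpace X]
    {P Q : Measure X} [IsProbabilityMeasure P] [IsProbabilityMeasure Q] {f : X → ℝ}
    (hf : Measurable f) (hf01 : ∀ x, f x ∈ Set.Icc (0 : ℝ) 1) :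
    |∫ x, f x ∂P - ∫ x, f x ∂Q| ≤ √2 * jsDist P Q := by
  set M : Measure X := (2 : ℝ≥0∞)⁻¹ • (P + Q)
  set p : X → ℝ := fun x => (P.rnDeriv M x).toReal
  set q : X → ℝ := fun x => (Q.rnDeriv M x).toReal
  have hPM : P ≪ M := absolutelyContinuous_inv_two_smul_add_left
  have hQM : Q ≪ M := absolutelyContinuous_inv_two_smul_add_right
  have hpq : ∀ᵐ x ∂M, p x + q x = 2 := toReal_rnDeriv_add_toReal_rnDeriv_inv_two_smul_add
  have hp : ∀ᵐ x ∂M, p x ∈ Set.Icc (0 : ℝ) 2 := by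
    filter_upwards [hpq] with x hx
    exact ⟨ENNReal.toReal_nonneg, by linarith [(ENNReal.toReal_nonneg : 0 ≤ q x)]⟩
  have hq : ∀ᵐ x ∂M, q x ∈ Set.Icc (0 : ℝ) 2 := by
    filter_upwards [hpq] with x hx
    exact ⟨ENNReal.toReal_nonneg, by linarith [(ENNReal.toReal_nonneg : 0 ≤ p x)]⟩
  have hint_mul_log : ∀ r : X → ℝ, Measurable r → (∀ᵐ x ∂M, r x ∈ Set.Icc (0 : ℝ) 2) →
      Integrable (fun x => r x * Real.log (r x)) M := fun r hr hr02 =>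
    Integrable.of_bound (by fun_prop) 2 (by
      filter_upwards [hr02] with x hx
      exact abs_mul_log_le_two hx.1 hx.2)
  have hsq : MemLp (fun x => p x - 1) 2 M :=
    MemLp.of_bound (by fun_prop) 1 (by
      filter_upwards [hp] with x hx
      exact abs_le.mpr ⟨by linarith [hx.1], by linarith [hx.2]⟩)
  calc |∫ x, f x ∂P - ∫ x, f x ∂Q| ≤ 1 / 2 * ∫ x, |p x - q x| ∂M :=
        abs_integral_sub_integral_le_integral_abs_rnDeriv_sub hPM hQM hf hf01
    _ = ∫ x, |p x - 1| ∂M := by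
        rw [← integral_const_mul]
        refine integral_congr_ae ?_
        filter_upwards [hpq] with x hx
        rw [show p x - q x = 2 * (p x - 1) by linarith, abs_mul, abs_two]
        ring
    _ ≤ √(∫ x, (p x - 1) ^ 2 ∂M) := integral_abs_le_sqrt_integral_sq hsq
    _ ≤ √(∫ x, (p x * Real.log (p x) + q x * Real.log (q x)) ∂M) := by
        refine Real.sqrt_le_sqrt <| integral_mono_ae hsq.integrable_sq
          ((hint_mul_log p (by fun_prop) hp).add (hint_mul_log q (by fun_prop) hq)) ?_
        filter_upwards [hpq, hp, hq] with x hx hpx hqx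
        exact sq_sub_one_le_mul_log_add_mul_log hpx.1 hqx.1 hx
    _ = √((klDivergence P M).toReal + (klDivergence Q M).toReal) := by
        rw [integral_add (hint_mul_log p (by fun_prop) hp) (hint_mul_log q (by fun_prop) hq),
          toReal_klDivergence_eq_integral_mul_log hPM (by simp),
          toReal_klDivergence_eq_integral_mul_log hQM (by simp)]
    _ = √2 * jsDist P Q := by
        change _ = √2 * √(1 / 2 * (klDivergence P M).toReal + 1 / 2 * (klDivergence Q M).toReal)
        rw [← Real.sqrt_mul zero_le_two]
        ring_nf

lemma abs_sub_le_abs_sub_add_abs_sub_add_abs_sub {G : Type*} [AddCommGroup G] [LinearOrder G]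
    [IsOrderedAddMonoid G] (a b c d : G) : |a - b| ≤ |c - d| + (|a - c| + |b - d|) := by
  calc |a - b| = |(a - c) + (c - d) + (d - b)| := by abel_nf
    _ ≤ |a - c| + |c - d| + |d - b| := abs_add_three _ _ _
    _ = |c - d| + (|a - c| + |b - d|) := by rw [abs_sub_comm d b]; abel

/-- Transfer of equal odds across domains: for any measurable `f : X → [0,1]`,
source domain `S` and target domain `T`,
`EOGAP_T(f) ≤ EOGAP_S(f) + √2 Σ_y Σ_a d_JS(P_T^{X|Y=y,A=a}, P_S^{X|Y=y,A=a})`. -/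
theorem eo_gap_domain_generalization
    {X : Type*} [MeasurableSpace X]
    (f : X → ℝ) (hmeas : Measurable f) (hf01 : ∀ x, f x ∈ Set.Icc (0 : ℝ) 1)
    (PS PT : Bool → Bool → Measure X)
    (hPS : ∀ y a, IsProbabilityMeasure (PS y a))
    (hPT : ∀ y a, IsProbabilityMeasure (PT y a)) :
    eoGap f PT
      ≤ eoGap f PS
        + Real.sqrt 2 * ∑ y : Bool, ∑ a : Bool, jsDist (PT y a) (PS y a) := by
  have hdomain : ∀ y a, |∫ x, f x ∂(PT y a) - ∫ x, f x ∂(PS y a)|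
      ≤ √2 * jsDist (PT y a) (PS y a) := fun y a => by
    have := hPT y a
    have := hPS y a
    exact abs_integral_sub_integral_le_sqrt_two_mul_jsDist hmeas hf01
  unfold eoGap
  rw [Finset.mul_sum, ← Finset.sum_add_distrib]
  refine Finset.sum_le_sum fun y _ => (abs_sub_le_abs_sub_add_abs_sub_add_abs_sub _ _
    (∫ x, f x ∂(PS y false)) (∫ x, f x ∂(PS y true))).trans ?_
  rw [Fintype.sum_bool]
  linarith [hdomain y false, hdomain y true]
end

section
/- Fix dimensions d, m ≥ 1, a learning rate η > 0, an initial weight matrix W₀ ∈ ℝ^{m×d}, in-context examples (x_1,y_1),…,(x_N,y_N) ∈ ℝ^d × ℝ^m, and a query pair (x_{N+1}, y_{N+1}) ∈ ℝ^d × ℝ^m. Form tokens e_j = (x_j, y_j) ∈ ℝ^{d+m} for j = 1,…,N+1, and let ΔW = −η ∇_W L(W₀) ∈ ℝ^{m×d} be the single gradient-descent update on the squared-error loss L(W) = (1/(2N)) Σ_{i=1}^N ‖W x_i − y_i‖² over the N in-context examples, i.e., ΔW = −(η/N) Σ_{i=1}^N (W₀ x_i − y_i) x_iᵀ. Then there exist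 key, query, and value matrices W_K, W_Q, W_V and a projection matrix P (all independent of the data) such that a single linear self-attention step applied to each token — namely e_j ↦ e_j + P V Kᵀ q_j, where V = W_V E, K = W_K E, q_j = W_Q e_j, and E ∈ ℝ^{(d+m)×N} is the matrix whose columns are the in-context tokens e_1,…,e_N — satisfies e_j + P V Kᵀ q_j = (x_j, y_j − ΔW x_j) for every j = 1,…,N+1, including the query token. -/
open Matrix

/-- The single gradient-descent update with learning rate `η` on the in-context
squared-error loss `L(W) = (1/(2N)) Σ_{i=1}^N ‖W x_i − y_i‖²` starting from `W₀`:
`ΔW = −(η/N) Σ_{i=1}^N (W₀ x_i − y_i) x_iᵀ`.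
The tokens are indexed by `Fin (N+1)`; the in-context examples are the first `N`
(obtained via `Fin.castSucc`) and the query is the last token. -/
noncomputable def gdUpdate {d m N : ℕ} (η : ℝ) (W₀ : Matrix (Fin m) (Fin d) ℝ)
    (x : Fin (N + 1) → Fin d → ℝ) (y : Fin (N + 1) → Fin m → ℝ) :
    Matrix (Fin m) (Fin d) ℝ :=
  Matrix.of fun a b =>
    -(η / (N : ℝ)) * ∑ i : Fin N,
      (W₀.mulVec (x i.castSucc) a - y i.castSucc a) * x i.castSucc b

/-- Linear self-attention can implement one step of gradient descent
(von Oswald et al.): for fixed dimensions, learning rate `η` and initial weight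
matrix `W₀`, there exist key, query and value matrices `W_K, W_Q, W_V` and a
projection matrix `P` — all independent of the data — such that for any in-context
examples `(x_j, y_j)`, `j = 1,…,N`, and query pair `(x_{N+1}, y_{N+1})`, the linear
self-attention step `e_j ↦ e_j + P (W_V E)(W_K E)ᵀ (W_Q e_j)` (with `E` the matrix
whose columns are the in-context tokens `e_1,…,e_N`) maps every token
`e_j = (x_j, y_j)` to `(x_j, y_j − ΔW x_j)`, including the query token. -/
theorem linear_attention_implements_gradient_descent
    (d m N : ℕ) (η : ℝ) (W₀ : Matrix (Fin m) (Fin d) ℝ) :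
    ∃ WK WQ WV P : Matrix (Fin d ⊕ Fin m) (Fin d ⊕ Fin m) ℝ,
      ∀ (x : Fin (N + 1) → Fin d → ℝ) (y : Fin (N + 1) → Fin m → ℝ),
        ∀ j : Fin (N + 1),
          (fun (e : Fin (N + 1) → (Fin d ⊕ Fin m) → ℝ)
               (E : Matrix (Fin d ⊕ Fin m) (Fin N) ℝ) =>
              e j + (P * (WV * E) * (WK * E)ᵀ).mulVec (WQ.mulVec (e j)))
            (fun j' => Sum.elim (x j') (y j'))
            (Matrix.of fun a i => Sum.elim (x i.castSucc) (y i.castSucc) a)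
          = Sum.elim (x j) (y j - (gdUpdate η W₀ x y).mulVec (x j)) := by
  refine ⟨fromBlocks 1 0 0 0, fromBlocks 1 0 0 0, fromBlocks 0 0 W₀ (-1),
    fromBlocks 0 0 0 ((η / (N : ℝ)) • 1), ?_⟩
  intro x y j
  funext a
  cases a with
  | inl a =>
    simp [Matrix.mul_apply, Matrix.mulVec, dotProduct, Fintype.sum_sum_type,
      Matrix.fromBlocks, Matrix.one_apply, Finset.mul_sum, Finset.sum_mul, gdUpdate]
  | inr r =>
    simp [Matrix.mul_apply, Matrix.mulVec, dotProduct, Fintype.sum_sum_type,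
      Matrix.fromBlocks, Matrix.one_apply, Finset.mul_sum, Finset.sum_mul, gdUpdate,
      Finset.sum_ite_eq, Finset.sum_ite_eq']
    refine Finset.sum_congr rfl fun b _ => Finset.sum_congr rfl fun i _ => ?_
    ring
end
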